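/- Let X₁, X₂, A_Y, A_Z, Z, Y be variables in the quantum instrumental-type scenario satisfying: X₁, X₂ and the pair (A_Y,A_Z) are mutually independent (so I(X₁:X₂) = 0, I(X₁X₂ : A_Y A_Z) = 0), and the Shannon/von Neumann basic inequalities and the data processing inequalities I(A_Z X₁ X₂ : A_Y) ≥ I(X₁ X₂ Z : A_Y) and I(A_Y Z : X_s) ≥ I(Y_{|S=s} Z : X_s) hold. Then ∑_{s=1}^{2} I(X_s : Y_{|S=s}) ≤ H(Z) follows as a linear consequence of these entropic constraints. -/
import Mathlib


open Finset

/-- Probability that the random variable `X` takes value `x`, for weights `μ`. -/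
noncomputable def prob {Ω α : Type} [Fintype Ω] [Fintype α] [DecidableEq α]
    (μ : Ω → ℝ) (X : Ω → α) (x : α) : ℝ :=
  ∑ ω, if X ω = x then μ ω else 0

/-- Shannon entropy (base 2) of a finite discrete random variable,
with the convention `0 * log₂ 0 = 0` (since `Real.logb 2 0 = 0`). -/
noncomputable def ent {Ω α : Type} [Fintype Ω] [Fintype α] [DecidableEq α]
    (μ : Ω → ℝ) (X : Ω → α) : ℝ :=
  -∑ x, prob μ X x * Real.logb 2 (prob μ X x)

/-- `μ` is a probability mass function on the finite sample space `Ω`. -/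
def IsPMF {Ω : Type} [Fintype Ω] (μ : Ω → ℝ) : Prop :=
  (∀ ω, 0 ≤ μ ω) ∧ ∑ ω, μ ω = 1

/-- Mutual information `I(X:Y) = H(X) + H(Y) - H(X,Y)`. -/
noncomputable def mutualInfo {Ω α β : Type} [Fintype Ω] [Fintype α] [Fintype β]
    [DecidableEq α] [DecidableEq β] (μ : Ω → ℝ) (X : Ω → α) (Y : Ω → β) : ℝ :=
  ent μ X + ent μ Y - ent μ (fun ω => (X ω, Y ω))

/-- Conditional mutual information
`I(X:Y|Z) = H(X,Z) + H(Y,Z) - H(Z) - H(X,Y,Z)`. -/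
noncomputable def condMutualInfo {Ω α β γ : Type} [Fintype Ω] [Fintype α] [Fintype β]
    [Fintype γ] [DecidableEq α] [DecidableEq β] [DecidableEq γ]
    (μ : Ω → ℝ) (X : Ω → α) (Y : Ω → β) (Z : Ω → γ) : ℝ :=
  ent μ (fun ω => (X ω, Z ω)) + ent μ (fun ω => (Y ω, Z ω)) - ent μ Z
    - ent μ (fun ω => (X ω, Y ω, Z ω))

/-- Conditional entropy `H(X|Y) = H(X,Y) - H(Y)`. -/
noncomputable def condEnt {Ω α β : Type} [Fintype Ω] [Fintype α] [Fintype β]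
    [DecidableEq α] [DecidableEq β] (μ : Ω → ℝ) (X : Ω → α) (Y : Ω → β) : ℝ :=
  ent μ (fun ω => (X ω, Y ω)) - ent μ Y


/-- The seven systems appearing in the post-selected quantum
information-causality scenario with binary S. -/
inductive V18 : Type
  | X1 | X2 | AY | AZ | Z | Y1 | Y2
deriving DecidableEq

open V18

/-- Coexisting sets: subsets of one of the four maximal coexisting sets. -/
def Coex (S : Finset V18) : Prop :=
  S ⊆ {X1, X2, AY, AZ} ∨ S ⊆ {X1, X2, Z, AY} ∨
  S ⊆ {X1, X2, Z, Y1} ∨ S ⊆ {X1, X2, Z, Y2}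

/-- Entropic information-causality inequality for n = 2: for any abstract
entropy function on the coexisting sets satisfying positivity, monotonicity,
submodularity, the independences I(X₁:X₂) = 0 and I(X₁X₂:A_YA_Z) = 0, and the
data processing inequalities I(A_ZX₁X₂:A_Y) ≥ I(X₁X₂Z:A_Y) and
I(A_YZ:X_s) ≥ I(Y_{|S=s}Z:X_s), one has
I(X₁:Y_{|S=1}) + I(X₂:Y_{|S=2}) ≤ H(Z). -/
theorem information_causality_entropic (h : Finset V18 → ℝ)
    (h0 : h ∅ = 0)
    (hpos : ∀ S : Finset V18, Coex S → 0 ≤ h S)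
    (hmono : ∀ S T : Finset V18, T ⊆ S → Coex S → h T ≤ h S)
    (hsub : ∀ S T : Finset V18, Coex (S ∪ T) → h (S ∩ T) + h (S ∪ T) ≤ h S + h T)
    (hI12 : h {X1} + h {X2} = h {X1, X2})
    (hIA : h {X1, X2} + h {AY, AZ} = h {X1, X2, AY, AZ})
    (hDPI1 : h {X1, X2, Z} + h {AY} - h {X1, X2, Z, AY}
        ≤ h {X1, X2, AZ} + h {AY} - h {X1, X2, AY, AZ})
    (hDPI2a : h {Y1, Z} + h {X1} - h {X1, Z, Y1}
        ≤ h {AY, Z} + h {X1} - h {X1, Z, AY})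
    (hDPI2b : h {Y2, Z} + h {X2} - h {X2, Z, Y2}
        ≤ h {AY, Z} + h {X2} - h {X2, Z, AY}) :
    (h {X1} + h {Y1} - h {X1, Y1}) + (h {X2} + h {Y2} - h {X2, Y2}) ≤ h {Z} := by
  have sub1 : h {Y1} + h {X1, Z, Y1} ≤ h {X1, Y1} + h {Y1, Z} := by
    have := hsub {X1, Y1} {Y1, Z} (by unfold Coex; decide)
    rw [show ({X1, Y1} : Finset V18) ∩ {Y1, Z} = {Y1} from by decide,
        show ({X1, Y1} : Finset V18) ∪ {Y1, Z} = {X1, Z, Y1} from by decide] at this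
    exact this
  have sub2 : h {Y2} + h {X2, Z, Y2} ≤ h {X2, Y2} + h {Y2, Z} := by
    have := hsub {X2, Y2} {Y2, Z} (by unfold Coex; decide)
    rw [show ({X2, Y2} : Finset V18) ∩ {Y2, Z} = {Y2} from by decide,
        show ({X2, Y2} : Finset V18) ∪ {Y2, Z} = {X2, Z, Y2} from by decide] at this
    exact this
  have sub3 : h {AY, Z} + h {X1, X2, Z, AY} ≤ h {X1, Z, AY} + h {X2, Z, AY} := by
    have := hsub {X1, Z, AY} {X2, Z, AY} (by unfold Coex; decide)
    rw [show ({X1, Z, AY} : Finset V18) ∩ {X2, Z, AY} = {AY, Z} from by decide,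
        show ({X1, Z, AY} : Finset V18) ∪ {X2, Z, AY} = {X1, X2, Z, AY} from by decide] at this
    exact this
  have sub4 : h {AY} + h {X1, X2, AY, AZ} ≤ h {X1, X2, AY} + h {AY, AZ} := by
    have := hsub {X1, X2, AY} {AY, AZ} (by unfold Coex; decide)
    rw [show ({X1, X2, AY} : Finset V18) ∩ {AY, AZ} = {AY} from by decide,
        show ({X1, X2, AY} : Finset V18) ∪ {AY, AZ} = {X1, X2, AY, AZ} from by decide] at this
    exact this
  have mono5 : h {X1, X2, AY} ≤ h {X1, X2, Z, AY} :=
    hmono {X1, X2, Z, AY} {X1, X2, AY} (by decide) (by unfold Coex; decide)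
  have sub6 : h ∅ + h {AY, Z} ≤ h {Z} + h {AY} := by
    have := hsub {Z} {AY} (by unfold Coex; decide)
    rw [show ({Z} : Finset V18) ∩ {AY} = ∅ from by decide,
        show ({Z} : Finset V18) ∪ {AY} = {AY, Z} from by decide] at this
    exact this
  linarith
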